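/- Suppose the weighted undirected graph a on n nodes is connected. A tuple (X₁*,…,Xₙ*,Y₁*,…,Yₙ*) is an optimal solution of problem (RCC-opt) if and only if there exist Λ¹_i* ∈ ℝ^{r×p}, Λ²_i* ∈ ℝ^{m×p}, Λ³_i* ∈ ℝ^{m_i×p} (i = 1,…,n) such that (X*,Y*,Λ¹*,Λ²*,Λ³*) is an equilibrium of algorithm (RCC-alg), i.e., all the right-hand sides of (RCC-alg) vanish at this point. -/

import Mathlib

open Matrix

/-- Squared Frobenius norm of a real matrix: `‖M‖_F² = tr (Mᵀ M)`. -/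
noncomputable def frobSq {α β : Type*} [Fintype α] [Fintype β] (M : Matrix α β ℝ) : ℝ :=
  Matrix.trace (Mᵀ * M)

/-- Frobenius inner product of real matrices: `⟨M,N⟩_F = tr (Mᵀ N)`. -/
noncomputable def frobInner {α β : Type*} [Fintype α] [Fintype β] (M N : Matrix α β ℝ) : ℝ :=
  Matrix.trace (Mᵀ * N)

/-- The weighted undirected graph with adjacency matrix `a` is connected: any two nodes are
joined by a path of adjacent nodes (nodes `u ≠ v` are adjacent iff `a u v > 0`). -/
def GraphConnected {n : ℕ} (a : Matrix (Fin n) (Fin n) ℝ) : Prop :=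
  ∀ i j : Fin n, Relation.ReflTransGen (fun u v : Fin n => u ≠ v ∧ 0 < a u v) i j

/-- Assemble a family of row blocks `M i ∈ ℝ^{d i × β}` into one matrix. -/
def blockRows {n : ℕ} {d : Fin n → ℕ} {β : Type*} (M : ∀ i, Matrix (Fin (d i)) β ℝ) :
    Matrix ((i : Fin n) × Fin (d i)) β ℝ :=
  Matrix.of fun s j => M s.1 s.2 j

/-- Assemble a family of column blocks `M i ∈ ℝ^{α × d i}` into one matrix. -/
def blockCols {n : ℕ} {d : Fin n → ℕ} {α : Type*} (M : ∀ i, Matrix α (Fin (d i)) ℝ) :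
    Matrix α ((i : Fin n) × Fin (d i)) ℝ :=
  Matrix.of fun k s => M s.1 k s.2

/-- The `i`-th row block of a matrix whose rows are partitioned according to `d`. -/
def rowBlk {n : ℕ} {d : Fin n → ℕ} {β : Type*}
    (Y : Matrix ((i : Fin n) × Fin (d i)) β ℝ) (i : Fin n) :
    Matrix (Fin (d i)) β ℝ :=
  Matrix.of fun k j => Y ⟨i, k⟩ j

/-- `[M]_R`: the matrix whose `i`-th row block is `M` and whose other row blocks are zero. -/
def embedRow {n : ℕ} {d : Fin n → ℕ} {β : Type*} (i : Fin n)
    (M : Matrix (Fin (d i)) β ℝ) :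
    Matrix ((i' : Fin n) × Fin (d i')) β ℝ :=
  Matrix.of fun s j => if h : s.1 = i then M (Fin.cast (congrArg d h) s.2) j else 0

/-- `[M]_C`: the matrix whose `i`-th column block is `M` and whose other column blocks are zero. -/
def embedCol {n : ℕ} {d : Fin n → ℕ} {α : Type*} (i : Fin n)
    (M : Matrix α (Fin (d i)) ℝ) :
    Matrix α ((i' : Fin n) × Fin (d i')) ℝ :=
  Matrix.of fun k s => if h : s.1 = i then M k (Fin.cast (congrArg d h) s.2) else 0

/-- Feasibility for problem (RCC-opt): consensus of the `X_i` and `Y_i`, and the local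
constraints `A_{vi} X_i = Y_i^{vi}`. -/
def RCCfeas {n r p : ℕ} {mdim : Fin n → ℕ}
    (Av : ∀ i, Matrix (Fin (mdim i)) (Fin r) ℝ)
    (X : Fin n → Matrix (Fin r) (Fin p) ℝ)
    (Y : Fin n → Matrix ((i : Fin n) × Fin (mdim i)) (Fin p) ℝ) : Prop :=
  (∀ i j, X i = X j) ∧ (∀ i j, Y i = Y j) ∧ (∀ i, Av i * X i = rowBlk (Y i) i)

/-- Objective of problem (RCC-opt): `Σ_i ‖Y_i B_{li} − F_{li}‖_F²`. -/
noncomputable def RCCobj {n p : ℕ} {mdim qdim : Fin n → ℕ}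
    (Bl : ∀ i, Matrix (Fin p) (Fin (qdim i)) ℝ)
    (Fl : ∀ i, Matrix ((i' : Fin n) × Fin (mdim i')) (Fin (qdim i)) ℝ)
    (Y : Fin n → Matrix ((i : Fin n) × Fin (mdim i)) (Fin p) ℝ) : ℝ :=
  ∑ i, frobSq (Y i * Bl i - Fl i)

/-- Right-hand side of the `X_i`-equation in algorithm (RCC-alg). -/
noncomputable def RCCrhsX {n r p : ℕ} {mdim : Fin n → ℕ}
    (a : Matrix (Fin n) (Fin n) ℝ)
    (Av : ∀ i, Matrix (Fin (mdim i)) (Fin r) ℝ)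
    (X : Fin n → Matrix (Fin r) (Fin p) ℝ)
    (Y : Fin n → Matrix ((i : Fin n) × Fin (mdim i)) (Fin p) ℝ)
    (L1 : Fin n → Matrix (Fin r) (Fin p) ℝ)
    (L3 : ∀ i, Matrix (Fin (mdim i)) (Fin p) ℝ) (i : Fin n) :
    Matrix (Fin r) (Fin p) ℝ :=
  -((Av i)ᵀ * (Av i * X i - rowBlk (Y i) i)) - (Av i)ᵀ * L3 i
    - ∑ j, a i j • (L1 i - L1 j) - ∑ j, a i j • (X i - X j)

/-- Right-hand side of the `Y_i`-equation in algorithm (RCC-alg). -/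
noncomputable def RCCrhsY {n r p : ℕ} {mdim qdim : Fin n → ℕ}
    (a : Matrix (Fin n) (Fin n) ℝ)
    (Av : ∀ i, Matrix (Fin (mdim i)) (Fin r) ℝ)
    (Bl : ∀ i, Matrix (Fin p) (Fin (qdim i)) ℝ)
    (Fl : ∀ i, Matrix ((i' : Fin n) × Fin (mdim i')) (Fin (qdim i)) ℝ)
    (X : Fin n → Matrix (Fin r) (Fin p) ℝ)
    (Y : Fin n → Matrix ((i : Fin n) × Fin (mdim i)) (Fin p) ℝ)
    (L2 : Fin n → Matrix ((i : Fin n) × Fin (mdim i)) (Fin p) ℝ)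
    (L3 : ∀ i, Matrix (Fin (mdim i)) (Fin p) ℝ) (i : Fin n) :
    Matrix ((i' : Fin n) × Fin (mdim i')) (Fin p) ℝ :=
  -((Y i * Bl i - Fl i) * (Bl i)ᵀ) + embedRow i (L3 i)
    + embedRow i (Av i * X i - rowBlk (Y i) i)
    - ∑ j, a i j • (Y i - Y j) - ∑ j, a i j • (L2 i - L2 j)

/-- Right-hand side of the `Λ¹_i`-equation in algorithm (RCC-alg). -/
noncomputable def RCCrhsL1 {n r p : ℕ}
    (a : Matrix (Fin n) (Fin n) ℝ)
    (X : Fin n → Matrix (Fin r) (Fin p) ℝ) (i : Fin n) :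
    Matrix (Fin r) (Fin p) ℝ :=
  ∑ j, a i j • (X i - X j)

/-- Right-hand side of the `Λ²_i`-equation in algorithm (RCC-alg). -/
noncomputable def RCCrhsL2 {n p : ℕ} {mdim : Fin n → ℕ}
    (a : Matrix (Fin n) (Fin n) ℝ)
    (Y : Fin n → Matrix ((i : Fin n) × Fin (mdim i)) (Fin p) ℝ) (i : Fin n) :
    Matrix ((i' : Fin n) × Fin (mdim i')) (Fin p) ℝ :=
  ∑ j, a i j • (Y i - Y j)

/-- Right-hand side of the `Λ³_i`-equation in algorithm (RCC-alg). -/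
noncomputable def RCCrhsL3 {n r p : ℕ} {mdim : Fin n → ℕ}
    (Av : ∀ i, Matrix (Fin (mdim i)) (Fin r) ℝ)
    (X : Fin n → Matrix (Fin r) (Fin p) ℝ)
    (Y : Fin n → Matrix ((i : Fin n) × Fin (mdim i)) (Fin p) ℝ) (i : Fin n) :
    Matrix (Fin (mdim i)) (Fin p) ℝ :=
  Av i * X i - rowBlk (Y i) i

/-- Equilibrium of algorithm (RCC-alg): all right-hand sides vanish. -/
noncomputable def RCCequil {n r p : ℕ} {mdim qdim : Fin n → ℕ}
    (a : Matrix (Fin n) (Fin n) ℝ)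
    (Av : ∀ i, Matrix (Fin (mdim i)) (Fin r) ℝ)
    (Bl : ∀ i, Matrix (Fin p) (Fin (qdim i)) ℝ)
    (Fl : ∀ i, Matrix ((i' : Fin n) × Fin (mdim i')) (Fin (qdim i)) ℝ)
    (X : Fin n → Matrix (Fin r) (Fin p) ℝ)
    (Y : Fin n → Matrix ((i : Fin n) × Fin (mdim i)) (Fin p) ℝ)
    (L1 : Fin n → Matrix (Fin r) (Fin p) ℝ)
    (L2 : Fin n → Matrix ((i : Fin n) × Fin (mdim i)) (Fin p) ℝ)
    (L3 : ∀ i, Matrix (Fin (mdim i)) (Fin p) ℝ) : Prop :=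
  ∀ i, RCCrhsX a Av X Y L1 L3 i = 0 ∧ RCCrhsY a Av Bl Fl X Y L2 L3 i = 0 ∧
    RCCrhsL1 a X i = 0 ∧ RCCrhsL2 a Y i = 0 ∧ RCCrhsL3 Av X Y i = 0

/-!
At a consensus point `X_i = X`, `Y_i = A X` (with `A` the stacked matrix of the `A_{vi}`) the
problem is the least-squares problem `min_X Σ_i ‖A X B_i - F_i‖²`; by convexity its minimizers are
exactly the solutions of the normal equation `Aᵀ G = 0`, `G = Σ_i (A X B_i - F_i) B_iᵀ`.
On a connected graph the weighted Laplacian `L` is symmetric with kernel the consensus families, so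
its range is the zero-sum families. Hence at an equilibrium the `Λ¹`, `Λ²` equations force
consensus, and summing the `X`- and `Y`-equations over `i` kills the Laplacian terms, leaving
`G = Σ_i R_i(Λ³_i)` and `Σ_i A_{vi}ᵀ Λ³_i = 0`, i.e. the normal equation. Conversely, from the
normal equation one takes `Λ³_i = G^{vi}` and solves the remaining equations for `Λ¹`, `Λ²`,
whose right-hand sides have zero sum.
-/

section Laplacian

variable {n : ℕ} (a : Matrix (Fin n) (Fin n) ℝ) (M : Type*) [AddCommGroup M] [Module ℝ M]

noncomputable def laplacian : (Fin n → M) →ₗ[ℝ] (Fin n → M) :=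
  LinearMap.pi fun i => ∑ j, a i j •
    (LinearMap.proj (R := ℝ) (φ := fun _ : Fin n => M) i - LinearMap.proj j)

variable {a M}

@[simp]
lemma laplacian_apply (Z : Fin n → M) (i : Fin n) :
    laplacian a M Z i = ∑ j, a i j • (Z i - Z j) := by
  simp [laplacian]

lemma sum_laplacian_apply (hsym : ∀ i j, a i j = a j i) (Z : Fin n → M) :
    ∑ i, laplacian a M Z i = 0 := by
  simp only [laplacian_apply, smul_sub, Finset.sum_sub_distrib, sub_eq_zero]
  rw [Finset.sum_comm]
  simp only [hsym]

lemma two_mul_sum_mul_laplacian (hsym : ∀ i j, a i j = a j i) (x : Fin n → ℝ) :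
    2 * ∑ i, x i * laplacian a ℝ x i = ∑ i, ∑ j, a i j * (x i - x j) ^ 2 := by
  have hswap : ∑ i, x i * laplacian a ℝ x i = ∑ i, ∑ j, a i j * (x j * (x j - x i)) := by
    simp only [laplacian_apply, smul_eq_mul, Finset.mul_sum]
    rw [Finset.sum_comm]
    exact Finset.sum_congr rfl fun i _ => Finset.sum_congr rfl fun j _ => by rw [hsym]; ring
  rw [two_mul]
  nth_rewrite 2 [hswap]
  simp only [laplacian_apply, smul_eq_mul, Finset.mul_sum, ← Finset.sum_add_distrib]
  exact Finset.sum_congr rfl fun i _ => Finset.sum_congr rfl fun j _ => by ring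

lemma eq_of_laplacian_eq_zero (hsym : ∀ i j, a i j = a j i) (hnonneg : ∀ i j, 0 ≤ a i j)
    (hconn : GraphConnected a) {x : Fin n → ℝ} (hx : laplacian a ℝ x = 0) (i j : Fin n) :
    x i = x j := by
  have hterm_nonneg : ∀ u v, 0 ≤ a u v * (x u - x v) ^ 2 := fun u v =>
    mul_nonneg (hnonneg u v) (sq_nonneg _)
  have hsum : ∑ u, ∑ v, a u v * (x u - x v) ^ 2 = 0 := by
    rw [← two_mul_sum_mul_laplacian hsym, hx]
    simp
  have hedge : ∀ u v, 0 < a u v → x u = x v := by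
    intro u v huv
    have hrow := congrFun ((Fintype.sum_eq_zero_iff_of_nonneg fun u =>
      Finset.sum_nonneg fun v _ => hterm_nonneg u v).1 hsum) u
    have hterm := congrFun ((Fintype.sum_eq_zero_iff_of_nonneg (hterm_nonneg u)).1 hrow) v
    simpa [huv.ne', sub_eq_zero] using hterm
  induction hconn i j with
  | refl => rfl
  | tail _ hstep ih => exact ih.trans (hedge _ _ hstep.2)

lemma laplacian_eq_zero_iff (hsym : ∀ i j, a i j = a j i) (hnonneg : ∀ i j, 0 ≤ a i j)
    (hconn : GraphConnected a) {Z : Fin n → M} :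
    laplacian a M Z = 0 ↔ ∀ i j, Z i = Z j := by
  refine ⟨fun hZ i j => ?_, fun h => funext fun i => by simp [← h i]⟩
  rw [← sub_eq_zero, ← Module.forall_dual_apply_eq_zero_iff ℝ]
  intro φ
  have hφZ : laplacian a ℝ (φ ∘ Z) = 0 := funext fun k => by
    simpa using congrArg φ (congrFun hZ k)
  simpa [sub_eq_zero] using eq_of_laplacian_eq_zero hsym hnonneg hconn hφZ i j

lemma mem_range_laplacian_iff (hsym : ∀ i j, a i j = a j i) (hnonneg : ∀ i j, 0 ≤ a i j)
    (hconn : GraphConnected a) {h : Fin n → ℝ} :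
    h ∈ LinearMap.range (laplacian a ℝ) ↔ ∑ i, h i = 0 := by
  let S : (Fin n → ℝ) →ₗ[ℝ] ℝ := ∑ i, LinearMap.proj i
  suffices LinearMap.range (laplacian a ℝ) = LinearMap.ker S by simp [this, S]
  have hle : LinearMap.range (laplacian a ℝ) ≤ LinearMap.ker S := by
    rintro _ ⟨z, rfl⟩
    simpa [S] using sum_laplacian_apply hsym z
  have hdisj : Disjoint (LinearMap.ker S) (LinearMap.ker (laplacian a ℝ)) := by
    rw [Submodule.disjoint_def]
    intro z hsum hker
    ext i
    have hconst := (laplacian_eq_zero_iff hsym hnonneg hconn).1 hker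
    have hn : (n : ℝ) ≠ 0 := by exact_mod_cast i.pos.ne'
    have : (n : ℝ) * z i = 0 := by
      simpa [S, ← hconst i] using LinearMap.mem_ker.1 hsum
    simpa [hn] using this
  refine Submodule.eq_of_le_of_finrank_le hle ?_
  have := Submodule.finrank_add_finrank_le_of_disjoint hdisj
  have := LinearMap.finrank_range_add_finrank_ker (laplacian a ℝ)
  omega

lemma exists_laplacian_eq (hsym : ∀ i j, a i j = a j i) (hnonneg : ∀ i j, 0 ≤ a i j)
    (hconn : GraphConnected a) {H : Fin n → M} (hH : ∑ i, H i = 0) :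
    ∃ Z, laplacian a M Z = H := by
  have hreal : ∀ k : Fin n, ∃ z : Fin n → ℝ,
      laplacian a ℝ z = Pi.single k 1 - fun _ => (n : ℝ)⁻¹ := by
    intro k
    rw [← LinearMap.mem_range, mem_range_laplacian_iff hsym hnonneg hconn]
    have hn : (n : ℝ) ≠ 0 := by exact_mod_cast k.pos.ne'
    simp [hn]
  choose z hz using hreal
  -- tensor the real solutions of `L z = e_k - 1/n` with the `H k`
  refine ⟨fun i => ∑ k, z k i • H k, funext fun i => ?_⟩
  calc laplacian a M (fun i => ∑ k, z k i • H k) i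
      = ∑ k, laplacian a ℝ (z k) i • H k := by
        simp only [laplacian_apply, ← Finset.sum_sub_distrib, ← sub_smul, Finset.smul_sum,
          smul_smul, smul_eq_mul, Finset.sum_smul]
        exact Finset.sum_comm
    _ = H i - (n : ℝ)⁻¹ • ∑ k, H k := by
        simp only [hz, Pi.sub_apply, sub_smul, Finset.sum_sub_distrib, Pi.single_apply, ite_smul,
          one_smul, zero_smul, Finset.sum_ite_eq, Finset.mem_univ, if_true, Finset.smul_sum]
    _ = H i := by simp [hH]

end Laplacian

section Frobenius

variable {α β γ : Type*} [Fintype α] [Fintype β] [Fintype γ]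

lemma frobSq_nonneg (M : Matrix α β ℝ) : 0 ≤ frobSq M := by
  simpa [frobSq] using (posSemidef_conjTranspose_mul_self M).trace_nonneg

lemma frobSq_eq_zero_iff {M : Matrix α β ℝ} : frobSq M = 0 ↔ M = 0 := by
  simpa [frobSq] using trace_conjTranspose_mul_self_eq_zero_iff (A := M)

lemma frobInner_self (M : Matrix α β ℝ) : frobInner M M = frobSq M := rfl

lemma frobSq_add (M N : Matrix α β ℝ) :
    frobSq (M + N) = frobSq M + 2 * frobInner M N + frobSq N := by
  have hcomm : trace (Nᵀ * M) = trace (Mᵀ * N) := by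
    rw [← trace_transpose, transpose_mul, transpose_transpose]
  simp only [frobSq, frobInner, transpose_add, Matrix.add_mul, Matrix.mul_add, trace_add, hcomm]
  ring

lemma frobSq_smul (t : ℝ) (M : Matrix α β ℝ) : frobSq (t • M) = t ^ 2 * frobSq M := by
  simp [frobSq, sq, mul_assoc]

lemma frobInner_smul_right (t : ℝ) (M N : Matrix α β ℝ) :
    frobInner M (t • N) = t * frobInner M N := by
  simp [frobInner]

lemma frobInner_zero_left (N : Matrix α β ℝ) : frobInner 0 N = 0 := by
  simp [frobInner]

lemma frobInner_sum_left {ι : Type*} (s : Finset ι) (M : ι → Matrix α β ℝ) (N : Matrix α β ℝ) :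
    frobInner (∑ i ∈ s, M i) N = ∑ i ∈ s, frobInner (M i) N := by
  simp [frobInner, transpose_sum, Matrix.sum_mul, trace_sum]

lemma frobInner_mul_left (A : Matrix α β ℝ) (P : Matrix α γ ℝ) (E : Matrix β γ ℝ) :
    frobInner P (A * E) = frobInner (Aᵀ * P) E := by
  rw [frobInner, frobInner, transpose_mul, transpose_transpose, Matrix.mul_assoc]

lemma frobInner_mul_right (P : Matrix α γ ℝ) (Q : Matrix α β ℝ) (B : Matrix β γ ℝ) :
    frobInner P (Q * B) = frobInner (P * Bᵀ) Q := by
  rw [frobInner, frobInner, transpose_mul, transpose_transpose, ← Matrix.mul_assoc,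
    trace_mul_comm, ← Matrix.mul_assoc]

end Frobenius

section Blocks

variable {n : ℕ} {d : Fin n → ℕ} {β γ : Type*}

lemma rowBlk_blockRows (M : ∀ i, Matrix (Fin (d i)) β ℝ) (i : Fin n) :
    rowBlk (blockRows M) i = M i := rfl

lemma blockRows_rowBlk (W : Matrix ((i : Fin n) × Fin (d i)) β ℝ) :
    blockRows (rowBlk W) = W := rfl

lemma blockRows_mul [Fintype γ] (M : ∀ i, Matrix (Fin (d i)) γ ℝ) (X : Matrix γ β ℝ) :
    blockRows (fun i => M i * X) = blockRows M * X := by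
  ext s j
  simp [blockRows, mul_apply]

lemma rowBlk_blockRows_mul [Fintype γ] (M : ∀ i, Matrix (Fin (d i)) γ ℝ) (X : Matrix γ β ℝ)
    (i : Fin n) :
    rowBlk (blockRows M * X) i = M i * X := by
  rw [← blockRows_mul, rowBlk_blockRows]

lemma transpose_blockRows_mul (M : ∀ i, Matrix (Fin (d i)) γ ℝ)
    (W : Matrix ((i : Fin n) × Fin (d i)) β ℝ) :
    (blockRows M)ᵀ * W = ∑ i, (M i)ᵀ * rowBlk W i := by
  ext k j
  simp [blockRows, rowBlk, mul_apply, Matrix.sum_apply, Fintype.sum_sigma]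

@[simp]
lemma embedRow_zero (i : Fin n) : embedRow (d := d) (β := β) i 0 = 0 := by
  ext s j
  simp [embedRow]

lemma rowBlk_sum_embedRow (M : ∀ i, Matrix (Fin (d i)) β ℝ) (i : Fin n) :
    rowBlk (∑ j, embedRow j (M j)) i = M i := by
  ext k l
  rw [rowBlk, of_apply, Matrix.sum_apply, Finset.sum_eq_single i]
  · simp [embedRow]
  · intro j _ hji
    simp [embedRow, hji.symm]
  · simp

lemma sum_embedRow_rowBlk (W : Matrix ((i : Fin n) × Fin (d i)) β ℝ) :
    ∑ i, embedRow i (rowBlk W i) = W := by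
  conv_rhs => rw [← blockRows_rowBlk W]
  ext ⟨i, k⟩ l
  exact congrFun (congrFun (rowBlk_sum_embedRow (rowBlk W) i) k) l

end Blocks

section Optimality

variable {n p : ℕ} {mdim qdim : Fin n → ℕ}
  (Bl : ∀ i, Matrix (Fin p) (Fin (qdim i)) ℝ)
  (Fl : ∀ i, Matrix ((i' : Fin n) × Fin (mdim i')) (Fin (qdim i)) ℝ)

noncomputable def RCCgrad (Y : Matrix ((i : Fin n) × Fin (mdim i)) (Fin p) ℝ) :
    Matrix ((i : Fin n) × Fin (mdim i)) (Fin p) ℝ :=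
  ∑ i, (Y * Bl i - Fl i) * (Bl i)ᵀ

lemma RCCobj_const_add (Y Δ : Matrix ((i : Fin n) × Fin (mdim i)) (Fin p) ℝ) :
    RCCobj Bl Fl (fun _ => Y + Δ) =
      RCCobj Bl Fl (fun _ => Y) + 2 * frobInner (RCCgrad Bl Fl Y) Δ + ∑ i, frobSq (Δ * Bl i) := by
  simp only [RCCobj, RCCgrad, frobInner_sum_left, Matrix.add_mul, add_sub_right_comm, frobSq_add,
    frobInner_mul_right, Finset.sum_add_distrib, Finset.mul_sum]

variable {ρ : Type*} [Fintype ρ] {A : Matrix ((i : Fin n) × Fin (mdim i)) ρ ℝ}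
  {X₀ : Matrix ρ (Fin p) ℝ}

lemma forall_RCCobj_le_iff :
    (∀ X : Matrix ρ (Fin p) ℝ, RCCobj Bl Fl (fun _ => A * X₀) ≤ RCCobj Bl Fl (fun _ => A * X)) ↔
      Aᵀ * RCCgrad Bl Fl (A * X₀) = 0 := by
  constructor
  · intro hmin
    set E := Aᵀ * RCCgrad Bl Fl (A * X₀) with hE
    have hcurv : 0 ≤ ∑ i, frobSq (A * E * Bl i) := Finset.sum_nonneg fun i _ => frobSq_nonneg _
    -- along `X₀ + t • E` the objective is a quadratic in `t` with linear coefficient `2 ‖E‖²`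
    have hquad : ∀ t : ℝ, 0 ≤ (∑ i, frobSq (A * E * Bl i)) * (t * t) + 2 * frobSq E * t + 0 := by
      intro t
      have h := hmin (X₀ + t • E)
      rw [Matrix.mul_add, Matrix.mul_smul, RCCobj_const_add, frobInner_smul_right,
        frobInner_mul_left, ← hE, frobInner_self] at h
      simp only [Matrix.smul_mul, frobSq_smul, ← Finset.mul_sum] at h
      linarith
    have hdisc := discrim_le_zero hquad
    rw [discrim] at hdisc
    exact frobSq_eq_zero_iff.1 (by nlinarith [frobSq_nonneg E])
  · intro hstat X
    have hsplit : A * X = A * X₀ + A * (X - X₀) := by rw [Matrix.mul_sub]; abel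
    have hrest : 0 ≤ ∑ i, frobSq (A * (X - X₀) * Bl i) :=
      Finset.sum_nonneg fun i _ => frobSq_nonneg _
    rw [hsplit, RCCobj_const_add, frobInner_mul_left, hstat, frobInner_zero_left]
    linarith

end Optimality

section Equilibrium

variable {n r p : ℕ} {mdim qdim : Fin n → ℕ} {a : Matrix (Fin n) (Fin n) ℝ}
  {Av : ∀ i, Matrix (Fin (mdim i)) (Fin r) ℝ}
  {Bl : ∀ i, Matrix (Fin p) (Fin (qdim i)) ℝ}
  {Fl : ∀ i, Matrix ((i' : Fin n) × Fin (mdim i')) (Fin (qdim i)) ℝ}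
  {L1 : Fin n → Matrix (Fin r) (Fin p) ℝ}
  {L2 : Fin n → Matrix ((i : Fin n) × Fin (mdim i)) (Fin p) ℝ}
  {L3 : ∀ i, Matrix (Fin (mdim i)) (Fin p) ℝ}

lemma RCCfeas_iff [NeZero n] {X : Fin n → Matrix (Fin r) (Fin p) ℝ}
    {Y : Fin n → Matrix ((i : Fin n) × Fin (mdim i)) (Fin p) ℝ} :
    RCCfeas Av X Y ↔ ∃ X₀, X = (fun _ => X₀) ∧ Y = fun _ => blockRows Av * X₀ := by
  constructor
  · rintro ⟨hX, hY, hA⟩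
    refine ⟨X 0, funext fun i => hX i 0, funext fun i => ?_⟩
    rw [← blockRows_rowBlk (Y i), ← blockRows_mul]
    exact congrArg blockRows (funext fun j => by rw [hY i j, ← hA j, hX j 0])
  · rintro ⟨X₀, rfl, rfl⟩
    exact ⟨fun _ _ => rfl, fun _ _ => rfl, fun i => (rowBlk_blockRows_mul Av X₀ i).symm⟩

lemma RCCequil.RCCfeas (hsym : ∀ i j, a i j = a j i) (hnonneg : ∀ i j, 0 ≤ a i j)
    (hconn : GraphConnected a) {X : Fin n → Matrix (Fin r) (Fin p) ℝ}
    {Y : Fin n → Matrix ((i : Fin n) × Fin (mdim i)) (Fin p) ℝ}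
    (h : RCCequil a Av Bl Fl X Y L1 L2 L3) : RCCfeas Av X Y :=
  ⟨(laplacian_eq_zero_iff hsym hnonneg hconn).1 (funext fun i => by
      rw [laplacian_apply]; exact (h i).2.2.1),
    (laplacian_eq_zero_iff hsym hnonneg hconn).1 (funext fun i => by
      rw [laplacian_apply]; exact (h i).2.2.2.1),
    fun i => sub_eq_zero.1 (h i).2.2.2.2⟩

variable {X₀ : Matrix (Fin r) (Fin p) ℝ}

lemma RCCequil_const_iff :
    RCCequil a Av Bl Fl (fun _ => X₀) (fun _ => blockRows Av * X₀) L1 L2 L3 ↔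
      ∀ i, (Av i)ᵀ * L3 i + laplacian a _ L1 i = 0 ∧
        embedRow i (L3 i) - laplacian a _ L2 i = (blockRows Av * X₀ * Bl i - Fl i) * (Bl i)ᵀ := by
  simp only [RCCequil, RCCrhsX, RCCrhsY, RCCrhsL1, RCCrhsL2, RCCrhsL3, rowBlk_blockRows_mul,
    sub_self, Matrix.mul_zero, embedRow_zero, smul_zero, Finset.sum_const_zero, neg_zero,
    zero_sub, sub_zero, add_zero, and_true, ← laplacian_apply]
  refine forall_congr' fun i => and_congr ?_ ?_
  · rw [← neg_add', neg_eq_zero]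
  · rw [← sub_eq_zero (b := _ * _ᵀ)]
    constructor <;> intro h <;> rw [← h] <;> abel

lemma transpose_mul_RCCgrad_eq_zero_of_RCCequil (hsym : ∀ i j, a i j = a j i)
    (h : RCCequil a Av Bl Fl (fun _ => X₀) (fun _ => blockRows Av * X₀) L1 L2 L3) :
    (blockRows Av)ᵀ * RCCgrad Bl Fl (blockRows Av * X₀) = 0 := by
  rw [RCCequil_const_iff] at h
  have hL3 : ∑ i, (Av i)ᵀ * L3 i = 0 := by
    have hsum := Finset.sum_eq_zero (s := Finset.univ) fun i _ => (h i).1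
    rwa [Finset.sum_add_distrib, sum_laplacian_apply hsym, add_zero] at hsum
  have hgrad : RCCgrad Bl Fl (blockRows Av * X₀) = ∑ i, embedRow i (L3 i) := by
    simp only [RCCgrad, ← fun i => (h i).2, Finset.sum_sub_distrib, sum_laplacian_apply hsym,
      sub_zero]
  simpa [transpose_blockRows_mul, hgrad, rowBlk_sum_embedRow] using hL3

lemma exists_RCCequil_of_transpose_mul_RCCgrad_eq_zero (hsym : ∀ i j, a i j = a j i)
    (hnonneg : ∀ i j, 0 ≤ a i j) (hconn : GraphConnected a)
    (hstat : (blockRows Av)ᵀ * RCCgrad Bl Fl (blockRows Av * X₀) = 0) :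
    ∃ L1 : Fin n → Matrix (Fin r) (Fin p) ℝ,
      ∃ L2 : Fin n → Matrix ((i : Fin n) × Fin (mdim i)) (Fin p) ℝ,
        ∃ L3 : ∀ i, Matrix (Fin (mdim i)) (Fin p) ℝ,
          RCCequil a Av Bl Fl (fun _ => X₀) (fun _ => blockRows Av * X₀) L1 L2 L3 := by
  set G := RCCgrad Bl Fl (blockRows Av * X₀) with hG
  obtain ⟨L1, hL1⟩ := exists_laplacian_eq hsym hnonneg hconn
    (H := fun i => -((Av i)ᵀ * rowBlk G i))
    (by rw [Finset.sum_neg_distrib, ← transpose_blockRows_mul, hstat, neg_zero])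
  obtain ⟨L2, hL2⟩ := exists_laplacian_eq hsym hnonneg hconn
    (H := fun i => embedRow i (rowBlk G i) - (blockRows Av * X₀ * Bl i - Fl i) * (Bl i)ᵀ)
    (by rw [Finset.sum_sub_distrib, sum_embedRow_rowBlk, hG, RCCgrad, sub_self])
  refine ⟨L1, L2, rowBlk G, RCCequil_const_iff.2 fun i => ⟨?_, ?_⟩⟩
  · rw [hL1]
    exact add_neg_cancel _
  · rw [hL2]
    exact sub_sub_cancel _ _

end Equilibrium

theorem stmt_5_general (n r p : ℕ) (hn : 0 < n) (mdim qdim : Fin n → ℕ)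
    (a : Matrix (Fin n) (Fin n) ℝ)
    (hsym : ∀ i j, a i j = a j i) (hnonneg : ∀ i j, 0 ≤ a i j)
    (hconn : GraphConnected a)
    (Av : ∀ i, Matrix (Fin (mdim i)) (Fin r) ℝ)
    (Bl : ∀ i, Matrix (Fin p) (Fin (qdim i)) ℝ)
    (Fl : ∀ i, Matrix ((i' : Fin n) × Fin (mdim i')) (Fin (qdim i)) ℝ)
    (X : Fin n → Matrix (Fin r) (Fin p) ℝ)
    (Y : Fin n → Matrix ((i : Fin n) × Fin (mdim i)) (Fin p) ℝ) :
    (RCCfeas Av X Y ∧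
        ∀ X' : Fin n → Matrix (Fin r) (Fin p) ℝ,
          ∀ Y' : Fin n → Matrix ((i : Fin n) × Fin (mdim i)) (Fin p) ℝ,
            RCCfeas Av X' Y' → RCCobj Bl Fl Y ≤ RCCobj Bl Fl Y') ↔
      (∃ L1 : Fin n → Matrix (Fin r) (Fin p) ℝ,
        ∃ L2 : Fin n → Matrix ((i : Fin n) × Fin (mdim i)) (Fin p) ℝ,
          ∃ L3 : ∀ i, Matrix (Fin (mdim i)) (Fin p) ℝ,
            RCCequil a Av Bl Fl X Y L1 L2 L3) := by
  have : NeZero n := .of_pos hn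
  constructor
  · rintro ⟨hfeas, hmin⟩
    obtain ⟨X₀, rfl, rfl⟩ := RCCfeas_iff.1 hfeas
    exact exists_RCCequil_of_transpose_mul_RCCgrad_eq_zero hsym hnonneg hconn
      ((forall_RCCobj_le_iff Bl Fl).1 fun X₁ => hmin _ _ (RCCfeas_iff.2 ⟨X₁, rfl, rfl⟩))
  · rintro ⟨L1, L2, L3, hequil⟩
    have hfeas := hequil.RCCfeas hsym hnonneg hconn
    obtain ⟨X₀, rfl, rfl⟩ := RCCfeas_iff.1 hfeas
    have hstat := transpose_mul_RCCgrad_eq_zero_of_RCCequil hsym hequil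
    refine ⟨hfeas, fun X' Y' hfeas' => ?_⟩
    obtain ⟨X₁, rfl, rfl⟩ := RCCfeas_iff.1 hfeas'
    exact (forall_RCCobj_le_iff Bl Fl).2 hstat X₁

theorem stmt_5 (n r p : ℕ) (hn : 0 < n) (mdim qdim : Fin n → ℕ)
    (a : Matrix (Fin n) (Fin n) ℝ)
    (hsym : ∀ i j, a i j = a j i) (hnonneg : ∀ i j, 0 ≤ a i j)
    (hdiag : ∀ i, a i i = 0) (hconn : GraphConnected a)
    (Av : ∀ i, Matrix (Fin (mdim i)) (Fin r) ℝ)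
    (Bl : ∀ i, Matrix (Fin p) (Fin (qdim i)) ℝ)
    (Fl : ∀ i, Matrix ((i' : Fin n) × Fin (mdim i')) (Fin (qdim i)) ℝ)
    (X : Fin n → Matrix (Fin r) (Fin p) ℝ)
    (Y : Fin n → Matrix ((i : Fin n) × Fin (mdim i)) (Fin p) ℝ) :
    (RCCfeas Av X Y ∧
        ∀ X' : Fin n → Matrix (Fin r) (Fin p) ℝ,
          ∀ Y' : Fin n → Matrix ((i : Fin n) × Fin (mdim i)) (Fin p) ℝ,
            RCCfeas Av X' Y' → RCCobj Bl Fl Y ≤ RCCobj Bl Fl Y') ↔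
      (∃ L1 : Fin n → Matrix (Fin r) (Fin p) ℝ,
        ∃ L2 : Fin n → Matrix ((i : Fin n) × Fin (mdim i)) (Fin p) ℝ,
          ∃ L3 : ∀ i, Matrix (Fin (mdim i)) (Fin p) ℝ,
            RCCequil a Av Bl Fl X Y L1 L2 L3) :=
  stmt_5_general n r p hn mdim qdim a hsym hnonneg hconn Av Bl Fl X Y
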